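/- Let G be a finite simple graph on vertex set {1,…,n} (no self-loops) in which every vertex has at least one neighbor, with graph Laplacian L. If a matrix P ∈ ℝ^{n×d} satisfies L = P Pᵀ, then P is both node-identifying and adjacency-identifying. -/

import Mathlib

/-!
With `W^Q = W^K = 1` the score matrix is a positive multiple of `P Pᵀ = L = D - A`. In each row of
`L` the diagonal entry is the degree, which is positive, and every other entry is `0` or `-1`, so
the row maximum sits exactly on the diagonal. With `W^K = -1` the scores are a positive multiple of
`A - D`, whose row `i` takes the value `1` exactly at the neighbours of `i` (there is at least one)
and `0` or `-deg i` elsewhere, so the row maxima are exactly the neighbours.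
-/

open Matrix

/-- The unnormalized attention matrix `(1/√d_k)·(P W^Q)(P W^K)ᵀ`. -/
noncomputable def attn {n : ℕ} {m : Type*} [Fintype m] (dk : ℝ)
    (P : Matrix (Fin n) m ℝ) (WQ WK : Matrix m m ℝ) : Matrix (Fin n) (Fin n) ℝ :=
  (1 / Real.sqrt dk) • ((P * WQ) * (P * WK)ᵀ)

/-- `P` is node-identifying: for some `W^Q, W^K`, the `(i,j)` entry of
`(1/√d_k)·(P W^Q)(P W^K)ᵀ` is a maximum of its row exactly when `i = j`. -/
def IsNodeIdentifying {n : ℕ} {m : Type*} [Fintype m] (dk : ℝ)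
    (P : Matrix (Fin n) m ℝ) : Prop :=
  ∃ WQ WK : Matrix m m ℝ, ∀ i j,
    (∀ l, attn dk P WQ WK i l ≤ attn dk P WQ WK i j) ↔ i = j

/-- `P` is adjacency-identifying: for some `W^Q, W^K`, the `(i,j)` entry of
`(1/√d_k)·(P W^Q)(P W^K)ᵀ` is a maximum of its row exactly when `i` and `j` are adjacent. -/
def IsAdjIdentifying {n : ℕ} {m : Type*} [Fintype m] (dk : ℝ) (G : SimpleGraph (Fin n))
    (P : Matrix (Fin n) m ℝ) : Prop :=
  ∃ WQ WK : Matrix m m ℝ, ∀ i j,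
    (∀ l, attn dk P WQ WK i l ≤ attn dk P WQ WK i j) ↔ G.Adj i j

namespace SimpleGraph

variable {V R : Type*} [Fintype V] [DecidableEq V] (G : SimpleGraph V) [DecidableRel G.Adj]
  [AddGroupWithOne R]

theorem lapMatrix_apply_self (i : V) : G.lapMatrix R i i = G.degree i := by
  simp [lapMatrix, degMatrix]

theorem lapMatrix_apply_of_adj {i j : V} (h : G.Adj i j) : G.lapMatrix R i j = -1 := by
  simp [lapMatrix, degMatrix, h.ne, h]

theorem lapMatrix_apply_of_ne_of_not_adj {i j : V} (hne : i ≠ j) (h : ¬G.Adj i j) :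
    G.lapMatrix R i j = 0 := by
  simp [lapMatrix, degMatrix, hne, h]

theorem lapMatrix_apply_nonpos_of_ne {i j : V} (hne : i ≠ j) : G.lapMatrix ℝ i j ≤ 0 := by
  by_cases h : G.Adj i j
  · simp [G.lapMatrix_apply_of_adj h]
  · simp [G.lapMatrix_apply_of_ne_of_not_adj hne h]

theorem forall_lapMatrix_le_iff {i : V} (hi : 0 < G.degree i) (j : V) :
    (∀ l, G.lapMatrix ℝ i l ≤ G.lapMatrix ℝ i j) ↔ i = j := by
  have hdiag : (0 : ℝ) < G.lapMatrix ℝ i i := by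
    rw [lapMatrix_apply_self]; exact_mod_cast hi
  constructor
  · intro h
    by_contra hne
    linarith [h i, G.lapMatrix_apply_nonpos_of_ne hne]
  · rintro rfl l
    rcases eq_or_ne i l with rfl | hne
    · exact le_rfl
    · linarith [G.lapMatrix_apply_nonpos_of_ne hne]

theorem neg_lapMatrix_apply_le_one (i l : V) : -G.lapMatrix ℝ i l ≤ 1 := by
  rcases eq_or_ne i l with rfl | hne
  · rw [lapMatrix_apply_self]; linarith [(G.degree i).cast_nonneg (α := ℝ)]
  · by_cases h : G.Adj i l
    · simp [G.lapMatrix_apply_of_adj h]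
    · simp [G.lapMatrix_apply_of_ne_of_not_adj hne h]

theorem forall_neg_lapMatrix_le_iff {i : V} (hi : 0 < G.degree i) (j : V) :
    (∀ l, -G.lapMatrix ℝ i l ≤ -G.lapMatrix ℝ i j) ↔ G.Adj i j := by
  constructor
  · intro h
    by_contra hadj
    obtain ⟨l, hl⟩ := (G.degree_pos_iff_exists_adj i).mp hi
    have hmax := h l
    rw [G.lapMatrix_apply_of_adj hl] at hmax
    rcases eq_or_ne i j with rfl | hne
    · rw [lapMatrix_apply_self] at hmax
      linarith [show (0 : ℝ) < G.degree i by exact_mod_cast hi]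
    · rw [G.lapMatrix_apply_of_ne_of_not_adj hne hadj] at hmax
      linarith
  · intro hadj l
    rw [G.lapMatrix_apply_of_adj hadj, neg_neg]
    exact G.neg_lapMatrix_apply_le_one i l

end SimpleGraph

theorem attn_one_eq_smul {n : ℕ} {m : Type*} [Fintype m] [DecidableEq m] (dk : ℝ)
    (P : Matrix (Fin n) m ℝ) (W : Matrix m m ℝ) :
    attn dk P 1 W = (1 / Real.sqrt dk) • (P * Wᵀ * Pᵀ) := by
  simp [attn, Matrix.transpose_mul, Matrix.mul_assoc]

theorem forall_smul_apply_le_iff {ι : Type*} {c : ℝ} (hc : 0 < c) (M : Matrix ι ι ℝ)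
    (i j : ι) : (∀ l, (c • M) i l ≤ (c • M) i j) ↔ ∀ l, M i l ≤ M i j := by
  simp only [Matrix.smul_apply, smul_eq_mul, mul_le_mul_iff_right₀ hc]

/-- if the graph Laplacian factors as `L = P Pᵀ`, then `P` is both
node-identifying and adjacency-identifying. -/
theorem stmt6 {n d : ℕ} (G : SimpleGraph (Fin n)) [DecidableRel G.Adj]
    (hdeg : ∀ v, 0 < G.degree v) (dk : ℝ) (hdk : 0 < dk)
    (P : Matrix (Fin n) (Fin d) ℝ)
    (hfac : G.lapMatrix ℝ = P * Pᵀ) :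
    IsNodeIdentifying dk P ∧ IsAdjIdentifying dk G P := by
  have hc : 0 < 1 / Real.sqrt dk := by positivity
  have hpos : attn dk P 1 1 = (1 / Real.sqrt dk) • G.lapMatrix ℝ := by
    rw [attn_one_eq_smul, hfac, transpose_one, Matrix.mul_one]
  have hneg : attn dk P 1 (-1) = (1 / Real.sqrt dk) • -G.lapMatrix ℝ := by
    rw [attn_one_eq_smul, hfac, transpose_neg, transpose_one, Matrix.mul_neg, Matrix.mul_one,
      Matrix.neg_mul]
  refine ⟨⟨1, 1, fun i j => ?_⟩, ⟨1, -1, fun i j => ?_⟩⟩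
  · rw [hpos, forall_smul_apply_le_iff hc]
    exact G.forall_lapMatrix_le_iff (hdeg i) j
  · rw [hneg, forall_smul_apply_le_iff hc]
    exact G.forall_neg_lapMatrix_le_iff (hdeg i) j
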